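/- arXiv:0807.0239 — 4 statements merged into one kernel-verified Lean document; each statement's English description precedes it below -/
import Mathlib

section
/- For the Davis–Skodje system with γ > 1, the ILDM approximation to the center manifold, defined as the set of points where the vector field f(x) is orthogonal to the orthogonal complement of the eigenvector e^c = ((1+x₁)³, 1 + ((γ+1)/(γ-1))x₁)ᵀ of Df (equivalently, f(x) is parallel to e^c), is given by x₂ = x₁/(1+x₁) + (2x₁²/γ²)·[1/((1 - 1/γ)(1+x₁)³)]. -/
/-!
Along a vertical line `x₁ = const` the ILDM residual `⟨f(x), w(x)⟩` is affine in `x₂`, with slope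
`γ (1 + x₁)³ ≠ 0`; it therefore vanishes at exactly one point, and clearing denominators identifies
that point as the stated graph.
-/

noncomputable def ildmGraph (γ x₁ : ℝ) : ℝ :=
  x₁ / (1 + x₁) + (2 * x₁ ^ 2 / γ ^ 2) * (1 / ((1 - 1 / γ) * (1 + x₁) ^ 3))

theorem ildm_residual_eq {γ x₁ : ℝ} (hγ₀ : γ ≠ 0) (hγ₁ : γ ≠ 1) (hx₁ : 1 + x₁ ≠ 0) (x₂ : ℝ) :
    (1 + ((γ + 1) / (γ - 1)) * x₁) * (-x₁)
        + (-(1 + x₁) ^ 3) * (-γ * x₂ + ((γ - 1) * x₁ + γ * x₁ ^ 2) / (1 + x₁) ^ 2)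
      = γ * (1 + x₁) ^ 3 * (x₂ - ildmGraph γ x₁) := by
  have hγ₁' : γ - 1 ≠ 0 := sub_ne_zero.mpr hγ₁
  have hγ₁'' : 1 - 1 / γ ≠ 0 := by
    rw [one_sub_div hγ₀]
    exact div_ne_zero hγ₁' hγ₀
  unfold ildmGraph
  field_simp
  ring

/-- The ILDM approximation for the Davis–Skodje system: the set of points where
the vector field is orthogonal to `w = (1 + ((γ+1)/(γ-1))x₁, -(1+x₁)³)`
(the orthogonal complement of the slow eigenvector) is the graph
`x₂ = x₁/(1+x₁) + (2x₁²/γ²)·[1/((1 - 1/γ)(1+x₁)³)]`. -/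
theorem davis_skodje_ildm (γ x₁ : ℝ) (hγ : 1 < γ) (hx₁ : 0 ≤ x₁) (x₂ : ℝ) :
    ((1 + ((γ + 1) / (γ - 1)) * x₁) * (-x₁)
        + (-(1 + x₁) ^ 3) * (-γ * x₂ + ((γ - 1) * x₁ + γ * x₁ ^ 2) / (1 + x₁) ^ 2) = 0)
      ↔ x₂ = x₁ / (1 + x₁) + (2 * x₁ ^ 2 / γ ^ 2) * (1 / ((1 - 1 / γ) * (1 + x₁) ^ 3)) := by
  have hγ₀ : γ ≠ 0 := by positivity
  have hx₁' : 1 + x₁ ≠ 0 := by positivity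
  rw [ildm_residual_eq hγ₀ hγ.ne' hx₁', mul_eq_zero, sub_eq_zero,
    or_iff_right (mul_ne_zero hγ₀ (pow_ne_zero 3 hx₁'))]
  rfl
end

section
/- For the 3D system with a ≠ b, a ≠ c, b ≠ 0, c ≠ 0: given x₁, the unique point (x₁, x̂₂, x̂₃) satisfying the ILDM orthogonality conditions ⟨w₁, f(x)⟩ = 0 and ⟨w₂, f(x)⟩ = 0, where w₁ = (2γx₁(b-2a)/(b-a), 1, 0)ᵀ and w₂ = (2γx₁(c-2a)/(c-a), 0, 1)ᵀ, has coordinate errors relative to the invariant manifold point (x₁, -γx₁², -γx₁²) of magnitudes |x̂₂ + γx₁²| = |2γx₁² a²/((a-b)b)| and |x̂₃ + γx₁²| = |2γx₁² a²/((a-c)c)|. -/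
/-!
Each orthogonality condition involves only one fast coordinate, and its left-hand side
factors as `b · (x₂ + γx₁² + 2γx₁²a²/((a-b)b))` (resp. with `c` and `x₃`). Since `b, c ≠ 0`,
the conditions pin down `x₂ + γx₁²` and `x₃ + γx₁²` exactly, which gives both the unique
solution and the size of its deviation from the invariant manifold `x₂ = x₃ = -γx₁²`.
-/

lemma ildm_condition_eq_mul {a b γ x₁ y : ℝ} (hab : a ≠ b) (hb : b ≠ 0) :
    2 * γ * x₁ * ((b - 2 * a) / (b - a)) * (a * x₁) + (b * y + γ * (b - 2 * a) * x₁ ^ 2) =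
      b * (y + γ * x₁ ^ 2 + 2 * γ * x₁ ^ 2 * a ^ 2 / ((a - b) * b)) := by
  have hba : b - a ≠ 0 := sub_ne_zero.mpr hab.symm
  have hab' : a - b ≠ 0 := sub_ne_zero.mpr hab
  field_simp
  ring

lemma ildm_condition_iff {a b γ x₁ y : ℝ} (hab : a ≠ b) (hb : b ≠ 0) :
    2 * γ * x₁ * ((b - 2 * a) / (b - a)) * (a * x₁) + (b * y + γ * (b - 2 * a) * x₁ ^ 2) = 0 ↔
      y + γ * x₁ ^ 2 = -(2 * γ * x₁ ^ 2 * a ^ 2 / ((a - b) * b)) := by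
  rw [ildm_condition_eq_mul hab hb, mul_eq_zero, or_iff_right hb, eq_neg_iff_add_eq_zero]

/-- ILDM errors for the 3D system: the unique solution of the ILDM orthogonality
conditions with `w₁, w₂` has errors `|2γx₁²a²/((a-b)b)|` and `|2γx₁²a²/((a-c)c)|`
relative to the invariant center-manifold point `(x₁, -γx₁², -γx₁²)`. -/
theorem cubic3d_ildm_error (a b c γ : ℝ) (hab : a ≠ b) (hac : a ≠ c)
    (hb : b ≠ 0) (hc : c ≠ 0) (x₁ : ℝ) :
    (∃! p : ℝ × ℝ,
      2 * γ * x₁ * ((b - 2 * a) / (b - a)) * (a * x₁)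
          + (b * p.1 + γ * (b - 2 * a) * x₁ ^ 2) = 0 ∧
      2 * γ * x₁ * ((c - 2 * a) / (c - a)) * (a * x₁)
          + (c * p.2 + γ * (c - 2 * a) * x₁ ^ 2) = 0) ∧
    (∀ x₂ x₃ : ℝ,
      (2 * γ * x₁ * ((b - 2 * a) / (b - a)) * (a * x₁)
          + (b * x₂ + γ * (b - 2 * a) * x₁ ^ 2) = 0 ∧
       2 * γ * x₁ * ((c - 2 * a) / (c - a)) * (a * x₁)
          + (c * x₃ + γ * (c - 2 * a) * x₁ ^ 2) = 0) →
      |x₂ + γ * x₁ ^ 2| = |2 * γ * x₁ ^ 2 * a ^ 2 / ((a - b) * b)| ∧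
      |x₃ + γ * x₁ ^ 2| = |2 * γ * x₁ ^ 2 * a ^ 2 / ((a - c) * c)|) := by
  simp only [ildm_condition_iff hab hb, ildm_condition_iff hac hc]
  set e₂ := 2 * γ * x₁ ^ 2 * a ^ 2 / ((a - b) * b)
  set e₃ := 2 * γ * x₁ ^ 2 * a ^ 2 / ((a - c) * c)
  refine ⟨⟨(-e₂ - γ * x₁ ^ 2, -e₃ - γ * x₁ ^ 2), by constructor <;> ring, ?_⟩, ?_⟩
  · rintro ⟨x₂, x₃⟩ ⟨h₂, h₃⟩
    ext <;> dsimp only at h₂ h₃ ⊢ <;> linarith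
  · rintro x₂ x₃ ⟨h₂, h₃⟩
    rw [h₂, h₃, abs_neg, abs_neg]
    exact ⟨rfl, rfl⟩
end

section
/- Consider the planar system ẋ = f(x) with f(x) = e^c(x₁)g(x₁) + e^s(x₁)h(x₁,x₂), where e^c, e^s are unit vector fields. Fix x₁ and suppose h(x₁, x₂^c) = 0 at the exact manifold point x₂^c. Let w be a unit vector with ⟨w, e^c⟩ = sin ε and ⟨w, e^s⟩ = sin(δ+ε), with sin(δ+ε) ≠ 0. Then to first order (i.e., linearizing h in x₂ about x₂^c with ∂h/∂x₂ ≠ 0), the solution x̂₂ of the approximate orthogonality condition ⟨f(x₁, x̂₂), w⟩ = 0 satisfies Δx₂ := x̂₂ - x₂^c = -(sin ε / sin(δ+ε))·g(x₁)·(∂h/∂x₂(x₁))⁻¹. -/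
/-! Pairing the linearized field with `w` turns the orthogonality condition into the scalar
linear equation `g sin ε + h' Δx₂ sin (δ + ε) = 0`, which is then solved for `Δx₂`. -/

theorem eq_neg_div_mul_mul_inv_of_mul_add_mul_mul_eq_zero {K : Type*} [Field K]
    {g s t c x : K} (ht : t ≠ 0) (hc : c ≠ 0) (h : g * s + c * x * t = 0) :
    x = -(s / t) * g * c⁻¹ := by
  field_simp
  linear_combination h

theorem manifold_approximation_error_general (ec es w : ℝ × ℝ) (g h' ε δ x₂c xhat₂ : ℝ)
    (hwc : w.1 * ec.1 + w.2 * ec.2 = Real.sin ε)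
    (hws : w.1 * es.1 + w.2 * es.2 = Real.sin (δ + ε))
    (hsn : Real.sin (δ + ε) ≠ 0) (hh' : h' ≠ 0)
    (horth : w.1 * (g * ec.1 + h' * (xhat₂ - x₂c) * es.1)
           + w.2 * (g * ec.2 + h' * (xhat₂ - x₂c) * es.2) = 0) :
    xhat₂ - x₂c = -(Real.sin ε / Real.sin (δ + ε)) * g * h'⁻¹ := by
  have hlin : g * Real.sin ε + h' * (xhat₂ - x₂c) * Real.sin (δ + ε) = 0 := by
    rw [← hwc, ← hws, ← horth]
    ring
  exact eq_neg_div_mul_mul_inv_of_mul_add_mul_mul_eq_zero hsn hh' hlin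

/-- First-order manifold approximation error (equation (29)): with the linearized
vector field `f(x₂) = g·e^c + h'·(x₂ - x₂^c)·e^s`, the solution `xhat₂` of the
approximate orthogonality condition `⟨f(xhat₂), w⟩ = 0` satisfies
`Δx₂ = -(sin ε / sin(δ+ε))·g·(∂h/∂x₂)⁻¹`. -/
theorem manifold_approximation_error (ec es w : ℝ × ℝ) (g h' ε δ x₂c xhat₂ : ℝ)
    (hec : ec.1 ^ 2 + ec.2 ^ 2 = 1) (hes : es.1 ^ 2 + es.2 ^ 2 = 1)
    (hw : w.1 ^ 2 + w.2 ^ 2 = 1)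
    (hwc : w.1 * ec.1 + w.2 * ec.2 = Real.sin ε)
    (hws : w.1 * es.1 + w.2 * es.2 = Real.sin (δ + ε))
    (hsn : Real.sin (δ + ε) ≠ 0) (hh' : h' ≠ 0)
    (horth : w.1 * (g * ec.1 + h' * (xhat₂ - x₂c) * es.1)
           + w.2 * (g * ec.2 + h' * (xhat₂ - x₂c) * es.2) = 0) :
    xhat₂ - x₂c = -(Real.sin ε / Real.sin (δ + ε)) * g * h'⁻¹ :=
  manifold_approximation_error_general ec es w g h' ε δ x₂c xhat₂ hwc hws hsn hh' horth
end

section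
/- Let A ∈ ℝⁿˣⁿ, and suppose Φ(T) = N(T)Σ(T)L(T)ᵀ is the SVD of the transition matrix of v̇ = Av (constant coefficients), Φ(T) = e^{AT}, with singular values e^{μᵢ(T)T} where μᵢ(T) = (1/T)ln σᵢ(T). Then as T → 0⁺, the FTLEs μᵢ(T) converge to the eigenvalues of the symmetric part (A + Aᵀ)/2 of A. (It suffices to prove: lim_{T→0⁺} (1/T)ln σᵢ(e^{AT}) = λᵢ((A+Aᵀ)/2), where σᵢ denotes the i-th singular value and λᵢ the i-th eigenvalue, both in increasing order.) -/
/-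
Write `Φ = e^{TA} = N diag(σ) Lᵀ`. Then `(ΦᵀΦ - 1) / (2T) = L diag((σᵢ² - 1) / (2T)) Lᵀ`, and
since `T ↦ ΦᵀΦ` has derivative `Aᵀ + A` at `0`, this matrix tends to `S = (A + Aᵀ) / 2`.
Sorted eigenvalues move by at most the size of a perturbation of the quadratic form (Weyl's
inequality, proved by the Courant–Fischer dimension count), so `(σᵢ² - 1) / (2T) → λᵢ`.
Finally `(1/T) log σᵢ = log (σᵢ²) / (2T)`, which `1 - 1/y ≤ log y ≤ y - 1` squeezes between
two quantities with that same limit.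
-/

open Matrix Filter Topology NormedSpace

namespace Matrix

variable {ι : Type*} [Fintype ι]

theorem abs_dotProduct_mulVec_le (M : Matrix ι ι ℝ) (x : ι → ℝ) :
    |x ⬝ᵥ M *ᵥ x| ≤ (∑ r, ∑ c, |M r c|) * (x ⬝ᵥ x) := by
  have hsq : ∀ r, x r * x r ≤ x ⬝ᵥ x := fun r =>
    Finset.single_le_sum (fun j _ => mul_self_nonneg (x j)) (Finset.mem_univ r)
  calc |x ⬝ᵥ M *ᵥ x| = |∑ r, ∑ c, M r c * (x r * x c)| := by
        simp only [dotProduct, mulVec, Finset.mul_sum]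
        congr 1; refine Finset.sum_congr rfl fun r _ => Finset.sum_congr rfl fun c _ => by ring
    _ ≤ ∑ r, ∑ c, |M r c| * |x r * x c| := by
        refine (Finset.abs_sum_le_sum_abs _ _).trans (Finset.sum_le_sum fun r _ => ?_)
        simpa only [abs_mul] using Finset.abs_sum_le_sum_abs (fun c => M r c * (x r * x c)) _
    _ ≤ ∑ r, ∑ c, |M r c| * (x ⬝ᵥ x) := by
        gcongr with r _ c _
        rw [abs_mul]
        nlinarith [hsq r, hsq c, abs_mul_abs_self (x r), abs_mul_abs_self (x c),
          abs_nonneg (x r), abs_nonneg (x c)]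
    _ = (∑ r, ∑ c, |M r c|) * (x ⬝ᵥ x) := by simp only [Finset.sum_mul]

section DecidableEq

variable [DecidableEq ι]

theorem dotProduct_mulVec_conj_diagonal (L : Matrix ι ι ℝ) (p y : ι → ℝ) :
    y ⬝ᵥ (L * diagonal p * Lᵀ) *ᵥ y = ∑ k, p k * (Lᵀ *ᵥ y) k ^ 2 := by
  rw [← mulVec_mulVec, ← mulVec_mulVec, dotProduct_mulVec, ← mulVec_transpose]
  simp only [dotProduct, mulVec_diagonal]
  exact Finset.sum_congr rfl fun k _ => by ring

theorem sum_sq_transpose_mulVec {L : Matrix ι ι ℝ} (hL : L * Lᵀ = 1) (y : ι → ℝ) :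
    ∑ k, (Lᵀ *ᵥ y) k ^ 2 = y ⬝ᵥ y := by
  simpa [hL] using (dotProduct_mulVec_conj_diagonal L 1 y).symm

theorem transpose_mul_self_of_eq_mul_diagonal_mul {Φ N L : Matrix ι ι ℝ} {s : ι → ℝ}
    (hN : Nᵀ * N = 1) (hΦ : Φ = N * diagonal s * Lᵀ) :
    Φᵀ * Φ = L * diagonal (fun k => s k ^ 2) * Lᵀ := by
  subst hΦ
  simp only [transpose_mul, transpose_transpose, diagonal_transpose, Matrix.mul_assoc]
  rw [← Matrix.mul_assoc Nᵀ, hN, Matrix.one_mul, ← Matrix.mul_assoc (diagonal s),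
    diagonal_mul_diagonal]
  simp only [sq]

theorem smul_conj_diagonal_sub_one {L : Matrix ι ι ℝ} (hL : L * Lᵀ = 1) (c : ℝ) (s : ι → ℝ) :
    c • (L * diagonal s * Lᵀ - 1) = L * diagonal (fun k => c * (s k - 1)) * Lᵀ := by
  have : diagonal (fun k => c * (s k - 1)) = c • (diagonal s - 1) := by
    rw [← diagonal_one, diagonal_sub, ← diagonal_smul]; rfl
  rw [this, Matrix.mul_smul, Matrix.smul_mul, Matrix.mul_sub, Matrix.sub_mul, Matrix.mul_one, hL]

theorem hasDerivAt_transpose_exp_smul_mul_exp_smul (A : Matrix ι ι ℝ) :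
    HasDerivAt (fun T : ℝ => (exp (T • A))ᵀ * exp (T • A)) (Aᵀ + A) 0 := by
  -- any matrix norm will do: it only serves to invoke the calculus of `exp`
  let : NormedRing (Matrix ι ι ℝ) := Matrix.linftyOpNormedRing
  let : NormedAlgebra ℝ (Matrix ι ι ℝ) := Matrix.linftyOpNormedAlgebra
  simp_rw [← exp_transpose, transpose_smul]
  have h := (hasDerivAt_exp_smul_const' (𝕂 := ℝ) Aᵀ 0).mul (hasDerivAt_exp_smul_const' (𝕂 := ℝ) A 0)
  simp only [zero_smul, exp_zero, mul_one, one_mul] at h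
  exact h

theorem tendsto_inv_two_mul_smul_transpose_exp_smul_mul_exp_smul_sub_one (A : Matrix ι ι ℝ) :
    Tendsto (fun T : ℝ => (2 * T)⁻¹ • ((exp (T • A))ᵀ * exp (T • A) - 1)) (𝓝[≠] 0)
      (𝓝 ((1 / 2 : ℝ) • (A + Aᵀ))) := by
  let : NormedRing (Matrix ι ι ℝ) := Matrix.linftyOpNormedRing
  let : NormedAlgebra ℝ (Matrix ι ι ℝ) := Matrix.linftyOpNormedAlgebra
  have h := (hasDerivAt_iff_tendsto_slope.mp
    (hasDerivAt_transpose_exp_smul_mul_exp_smul A)).const_smul (1 / 2 : ℝ)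
  rw [add_comm A]
  refine h.congr fun T => ?_
  simp [slope_def_module, smul_smul, mul_comm]

end DecidableEq

variable [LinearOrder ι]

theorem exists_ne_zero_mulVec_eq_zero_of_lt_of_gt (M N : Matrix ι ι ℝ) (i : ι) :
    ∃ y ≠ 0, (∀ k, i < k → (M *ᵥ y) k = 0) ∧ ∀ k, k < i → (N *ᵥ y) k = 0 := by
  -- fewer equations than unknowns: `Ψ` misses the `i`-th coordinate, so it has a kernel
  let Ψ : (ι → ℝ) →ₗ[ℝ] ι → ℝ := LinearMap.pi fun k =>
    if i < k then (LinearMap.proj k).comp M.mulVecLin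
    else if k < i then (LinearMap.proj k).comp N.mulVecLin else 0
  have hΨ : ¬ Function.Surjective Ψ := fun h => by
    obtain ⟨y, hy⟩ := h (Pi.single i 1)
    simpa [Ψ] using congrFun hy i
  obtain ⟨y, hy, hy0⟩ : ∃ y, Ψ y = 0 ∧ y ≠ 0 := by
    simpa [injective_iff_map_eq_zero, ← LinearMap.injective_iff_surjective] using hΨ
  refine ⟨y, hy0, fun k hk => ?_, fun k hk => ?_⟩
  · simpa [Ψ, hk] using congrFun hy k
  · simpa [Ψ, hk, lt_asymm hk] using congrFun hy k

theorem dotProduct_mulVec_conj_diagonal_le {L : Matrix ι ι ℝ} (hL : L * Lᵀ = 1) {p : ι → ℝ}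
    (hp : Monotone p) {i : ι} {y : ι → ℝ} (hy : ∀ k, i < k → (Lᵀ *ᵥ y) k = 0) :
    y ⬝ᵥ (L * diagonal p * Lᵀ) *ᵥ y ≤ p i * (y ⬝ᵥ y) := by
  rw [dotProduct_mulVec_conj_diagonal, ← sum_sq_transpose_mulVec hL, Finset.mul_sum]
  refine Finset.sum_le_sum fun k _ => ?_
  rcases le_or_gt k i with hk | hk
  · exact mul_le_mul_of_nonneg_right (hp hk) (sq_nonneg _)
  · simp [hy k hk]

theorem le_dotProduct_mulVec_conj_diagonal {U : Matrix ι ι ℝ} (hU : U * Uᵀ = 1) {q : ι → ℝ}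
    (hq : Monotone q) {i : ι} {y : ι → ℝ} (hy : ∀ k, k < i → (Uᵀ *ᵥ y) k = 0) :
    q i * (y ⬝ᵥ y) ≤ y ⬝ᵥ (U * diagonal q * Uᵀ) *ᵥ y := by
  rw [dotProduct_mulVec_conj_diagonal, ← sum_sq_transpose_mulVec hU, Finset.mul_sum]
  refine Finset.sum_le_sum fun k _ => ?_
  rcases le_or_gt i k with hk | hk
  · exact mul_le_mul_of_nonneg_right (hq hk) (sq_nonneg _)
  · simp [hy k hk]

theorem le_add_of_dotProduct_mulVec_sub_conj_diagonal_le {L U : Matrix ι ι ℝ} (hL : L * Lᵀ = 1)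
    (hU : U * Uᵀ = 1) {p q : ι → ℝ} (hp : Monotone p) (hq : Monotone q) {ε : ℝ}
    (hε : ∀ x, x ⬝ᵥ (U * diagonal q * Uᵀ - L * diagonal p * Lᵀ) *ᵥ x ≤ ε * (x ⬝ᵥ x)) (i : ι) :
    q i ≤ p i + ε := by
  obtain ⟨y, hy0, hyL, hyU⟩ := exists_ne_zero_mulVec_eq_zero_of_lt_of_gt Lᵀ Uᵀ i
  have hyy : 0 < y ⬝ᵥ y := by simpa using dotProduct_self_star_pos_iff.mpr hy0
  have hP := dotProduct_mulVec_conj_diagonal_le hL hp hyL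
  have hQ := le_dotProduct_mulVec_conj_diagonal hU hq hyU
  have hPQ := hε y
  rw [sub_mulVec, dotProduct_sub] at hPQ
  nlinarith

theorem abs_sub_le_sum_abs_conj_diagonal_sub {L U : Matrix ι ι ℝ} (hL : L * Lᵀ = 1)
    (hU : U * Uᵀ = 1) {p q : ι → ℝ} (hp : Monotone p) (hq : Monotone q) (i : ι) :
    |p i - q i| ≤ ∑ r, ∑ c, |(L * diagonal p * Lᵀ - U * diagonal q * Uᵀ) r c| := by
  have hquad : ∀ (M : Matrix ι ι ℝ) x, x ⬝ᵥ M *ᵥ x ≤ (∑ r, ∑ c, |M r c|) * (x ⬝ᵥ x) :=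
    fun M x => (le_abs_self _).trans (abs_dotProduct_mulVec_le M x)
  have hsymm : ∑ r, ∑ c, |(U * diagonal q * Uᵀ - L * diagonal p * Lᵀ) r c|
      = ∑ r, ∑ c, |(L * diagonal p * Lᵀ - U * diagonal q * Uᵀ) r c| := by
    simp only [sub_apply, abs_sub_comm]
  have hpq := le_add_of_dotProduct_mulVec_sub_conj_diagonal_le hU hL hq hp (hquad _) i
  have hqp := le_add_of_dotProduct_mulVec_sub_conj_diagonal_le hL hU hp hq (hquad _) i
  rw [hsymm] at hqp
  rw [abs_sub_le_iff]
  constructor <;> linarith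

theorem tendsto_apply_of_tendsto_conj_diagonal {α : Type*} {l : Filter α}
    {P : α → Matrix ι ι ℝ} {p : α → ι → ℝ} {S : Matrix ι ι ℝ} {q : ι → ℝ}
    (hP : Tendsto P l (𝓝 S))
    (hp : ∀ᶠ a in l, Monotone (p a) ∧
      ∃ L : Matrix ι ι ℝ, L * Lᵀ = 1 ∧ P a = L * diagonal (p a) * Lᵀ)
    (hq : Monotone q) (hS : ∃ U : Matrix ι ι ℝ, U * Uᵀ = 1 ∧ S = U * diagonal q * Uᵀ) (i : ι) :
    Tendsto (fun a => p a i) l (𝓝 (q i)) := by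
  obtain ⟨U, hU, rfl⟩ := hS
  have hε : Tendsto (fun a => ∑ r, ∑ c, |(P a - U * diagonal q * Uᵀ) r c|) l (𝓝 0) := by
    have h0 : Tendsto (fun a => P a - U * diagonal q * Uᵀ) l (𝓝 0) := by
      simpa using hP.sub_const (U * diagonal q * Uᵀ)
    simpa using tendsto_finsetSum _ fun r _ => tendsto_finsetSum _ fun c _ =>
      (((continuous_id.matrix_elem r c).tendsto 0).comp h0).abs
  rw [tendsto_iff_dist_tendsto_zero]
  refine squeeze_zero' (Eventually.of_forall fun a => dist_nonneg) ?_ hε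
  filter_upwards [hp] with a ⟨hpa, L, hL, hPa⟩
  rw [hPa, Real.dist_eq]
  exact abs_sub_le_sum_abs_conj_diagonal_sub hL hU hpa hq i

end Matrix

theorem Filter.Tendsto.log_div_of_sub_one_div {α : Type*} {l : Filter α} {y d : α → ℝ} {c : ℝ}
    (h : Tendsto (fun a => (y a - 1) / d a) l (𝓝 c)) (hd : Tendsto d l (𝓝 0))
    (hd0 : ∀ᶠ a in l, 0 < d a) (hy : ∀ᶠ a in l, 0 < y a) :
    Tendsto (fun a => Real.log (y a) / d a) l (𝓝 c) := by
  have hy1 : Tendsto y l (𝓝 1) := by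
    have := (hd.mul h).const_add 1
    rw [zero_mul, add_zero] at this
    refine this.congr' ?_
    filter_upwards [hd0] with a ha
    field_simp
    ring
  have hlower : Tendsto (fun a => (y a - 1) / d a / y a) l (𝓝 c) := by
    rw [← div_one c]
    exact h.div hy1 one_ne_zero
  refine tendsto_of_tendsto_of_tendsto_of_le_of_le' hlower h ?_ ?_
  · filter_upwards [hd0, hy] with a ha hya
    calc (y a - 1) / d a / y a = (1 - (y a)⁻¹) / d a := by field_simp
      _ ≤ Real.log (y a) / d a := by gcongr; exact Real.one_sub_inv_le_log_of_pos hya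
  · filter_upwards [hd0, hy] with a ha hya
    gcongr
    exact Real.log_le_sub_one_of_pos hya

/-- As `T → 0⁺`, the finite-time Lyapunov exponents `(1/T) ln σᵢ(e^{AT})` (singular
values in increasing order) converge to the eigenvalues (in increasing order) of
the symmetric part `(A + Aᵀ)/2` of `A`. -/
theorem ftle_short_time_limit (n : ℕ) (A : Matrix (Fin n) (Fin n) ℝ)
    (σ : ℝ → Fin n → ℝ) (lam : Fin n → ℝ)
    (hσ : ∀ T : ℝ, 0 < T → Monotone (σ T) ∧ (∀ i, 0 < σ T i) ∧
      ∃ N L : Matrix (Fin n) (Fin n) ℝ, Nᵀ * N = 1 ∧ N * Nᵀ = 1 ∧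
        Lᵀ * L = 1 ∧ L * Lᵀ = 1 ∧
        NormedSpace.exp (T • A) = N * Matrix.diagonal (σ T) * Lᵀ)
    (hlam : Monotone lam)
    (hU : ∃ U : Matrix (Fin n) (Fin n) ℝ, Uᵀ * U = 1 ∧ U * Uᵀ = 1 ∧
      (1 / 2 : ℝ) • (A + Aᵀ) = U * Matrix.diagonal lam * Uᵀ)
    (i : Fin n) :
    Filter.Tendsto (fun T : ℝ => (1 / T) * Real.log (σ T i))
      (nhdsWithin 0 (Set.Ioi 0)) (nhds (lam i)) := by
  obtain ⟨U, -, hU, hS⟩ := hU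
  have hgram : ∀ᶠ T in 𝓝[>] (0 : ℝ), Monotone (fun k => (σ T k ^ 2 - 1) / (2 * T)) ∧
      ∃ L : Matrix (Fin n) (Fin n) ℝ, L * Lᵀ = 1 ∧
        (2 * T)⁻¹ • ((exp (T • A))ᵀ * exp (T • A) - 1)
          = L * diagonal (fun k => (σ T k ^ 2 - 1) / (2 * T)) * Lᵀ := by
    filter_upwards [self_mem_nhdsWithin] with T (hT : 0 < T)
    obtain ⟨hmono, hpos, N, L, hN, -, -, hL, hexp⟩ := hσ T hT
    refine ⟨fun a b hab => ?_, L, hL, ?_⟩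
    · have hσab := hmono hab
      have hσa := hpos a
      dsimp only
      gcongr
    · rw [transpose_mul_self_of_eq_mul_diagonal_mul hN hexp, smul_conj_diagonal_sub_one hL]
      simp_rw [div_eq_inv_mul]
  have hlim := tendsto_apply_of_tendsto_conj_diagonal
    ((tendsto_inv_two_mul_smul_transpose_exp_smul_mul_exp_smul_sub_one A).mono_left
      (nhdsGT_le_nhdsNE 0)) hgram hlam ⟨U, hU, hS⟩ i
  have h2T : Tendsto (fun T : ℝ => 2 * T) (𝓝[>] 0) (𝓝 0) := by
    refine tendsto_nhdsWithin_of_tendsto_nhds ?_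
    simpa using (continuous_const_mul (2 : ℝ)).tendsto 0
  refine (hlim.log_div_of_sub_one_div h2T ?_ ?_).congr' ?_
  · filter_upwards [self_mem_nhdsWithin] with T (hT : 0 < T) using by positivity
  · filter_upwards [self_mem_nhdsWithin] with T (hT : 0 < T) using pow_pos ((hσ T hT).2.1 i) 2
  · filter_upwards [self_mem_nhdsWithin] with T (hT : 0 < T)
    rw [Real.log_pow]
    field_simp
    push_cast
    ring
end
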